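/- arXiv:1812.03759 — 4 statements merged into one kernel-verified Lean document; each statement's English description precedes it below -/
import Mathlib

section
/- Let s > 0 and let σ, ρ, τ, ε be real numbers. The symmetric (2l+l)-block matrix G₀ with block rows [(σ + (ε²−1)/s)I, 0, −εI], [0, (ρ + (τ²−1)/s)I, −τI], [−εI, −τI, sI] (each block an l×l multiple of the identity) is positive definite if and only if σ − 1/s > 0 and (σs − 1)(ρs − 1) > τ²ε². -/
/-!
The quadratic form of `G₀` splits into `l` copies of the ternary form
`Q(x, y, z) = α x² + β y² + s z² - 2εxz - 2τyz` with `α = σ + (ε² - 1)/s`, `β = ρ + (τ² - 1)/s`.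
Completing the square in `z`,
`s Q = (sz - εx - τy)² + (σs - 1) x² - 2ετ xy + (ρs - 1) y²`,
so `Q` is positive definite iff this binary form is.
-/

open Matrix

theorem binary_form_pos_iff {a b c : ℝ} :
    (∀ x y : ℝ, (x, y) ≠ 0 → 0 < a * x ^ 2 + 2 * b * x * y + c * y ^ 2) ↔
      0 < a ∧ b ^ 2 < a * c := by
  constructor
  · intro h
    have ha : 0 < a := by simpa using h 1 0 (by simp)
    have hval : 0 < a * (a * c - b ^ 2) := by
      have := h (-b) a (by simp [ha.ne'])
      linarith
    exact ⟨ha, by nlinarith [(pos_iff_pos_of_mul_pos hval).mp ha]⟩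
  · rintro ⟨ha, hdisc⟩ x y hxy
    have hsq : a * (a * x ^ 2 + 2 * b * x * y + c * y ^ 2) =
        (a * x + b * y) ^ 2 + (a * c - b ^ 2) * y ^ 2 := by ring
    refine pos_of_mul_pos_right (hsq ▸ ?_) ha.le
    rcases eq_or_ne y 0 with rfl | hy
    · have hx : x ≠ 0 := by simpa using hxy
      have : a ≠ 0 := ha.ne'
      have : 0 < (a * x) ^ 2 := by positivity
      simpa using this
    · have : 0 < (a * c - b ^ 2) * y ^ 2 := mul_pos (by linarith) (by positivity)
      positivity

def arrowheadForm (α β s ε τ : ℝ) (p : ℝ × ℝ × ℝ) : ℝ :=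
  α * p.1 ^ 2 + β * p.2.1 ^ 2 + s * p.2.2 ^ 2 - 2 * ε * p.1 * p.2.2 - 2 * τ * p.2.1 * p.2.2

theorem mul_arrowheadForm (α β s ε τ x y z : ℝ) :
    s * arrowheadForm α β s ε τ (x, y, z) = (s * z - ε * x - τ * y) ^ 2 +
      ((α * s - ε ^ 2) * x ^ 2 + 2 * (-(ε * τ)) * x * y + (β * s - τ ^ 2) * y ^ 2) := by
  unfold arrowheadForm; ring

theorem forall_arrowheadForm_pos_iff_binary {α β s ε τ : ℝ} (hs : 0 < s) :
    (∀ p : ℝ × ℝ × ℝ, p ≠ 0 → 0 < arrowheadForm α β s ε τ p) ↔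
      ∀ x y : ℝ, (x, y) ≠ 0 →
        0 < (α * s - ε ^ 2) * x ^ 2 + 2 * (-(ε * τ)) * x * y + (β * s - τ ^ 2) * y ^ 2 := by
  constructor
  · intro h x y hxy
    have hp : ((x, y, (ε * x + τ * y) / s) : ℝ × ℝ × ℝ) ≠ 0 := by
      contrapose! hxy; simp_all
    have := mul_arrowheadForm α β s ε τ x y ((ε * x + τ * y) / s)
    rw [mul_div_cancel₀ _ hs.ne'] at this
    nlinarith [mul_pos hs (h _ hp)]
  · rintro h ⟨x, y, z⟩ hp
    refine pos_of_mul_pos_right ?_ hs.le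
    rw [mul_arrowheadForm]
    by_cases hxy : (x, y) = 0
    · obtain ⟨rfl, rfl⟩ := Prod.mk_eq_zero.mp hxy
      have hz : z ≠ 0 := by simpa using hp
      have : s ≠ 0 := hs.ne'
      have : 0 < (s * z) ^ 2 := by positivity
      simpa using this
    · have := h x y hxy
      positivity

theorem forall_arrowheadForm_pos_iff {α β s ε τ : ℝ} (hs : 0 < s) :
    (∀ p : ℝ × ℝ × ℝ, p ≠ 0 → 0 < arrowheadForm α β s ε τ p) ↔
      0 < α * s - ε ^ 2 ∧ ε ^ 2 * τ ^ 2 < (α * s - ε ^ 2) * (β * s - τ ^ 2) := by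
  rw [forall_arrowheadForm_pos_iff_binary hs, binary_form_pos_iff, neg_sq, mul_pow]

theorem forall_sum_pos_iff {ι V : Type*} [Fintype ι] [Nonempty ι] [Zero V] {q : V → ℝ}
    (hq : q 0 = 0) :
    (∀ f : ι → V, f ≠ 0 → 0 < ∑ i, q (f i)) ↔ ∀ v : V, v ≠ 0 → 0 < q v := by
  classical
  constructor
  · intro h v hv
    obtain ⟨i⟩ := ‹Nonempty ι›
    have hf : (Pi.single i v : ι → V) ≠ 0 := by simpa [Pi.single_eq_zero_iff] using hv
    have := h _ hf
    rwa [Fintype.sum_eq_single i fun j hj => by rw [Pi.single_eq_of_ne hj, hq],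
      Pi.single_eq_same] at this
  · intro h f hf
    obtain ⟨i, hi⟩ := Function.ne_iff.mp hf
    refine Finset.sum_pos' (fun j _ => ?_) ⟨i, Finset.mem_univ i, h _ hi⟩
    rcases eq_or_ne (f j) 0 with hj | hj
    · simp [hj, hq]
    · exact (h _ hj).le

section ArrowheadBlockMatrix

variable (ι : Type*)

@[simps]
def sumSumArrowEquiv (R : Type*) : (ι ⊕ ι ⊕ ι → R) ≃ (ι → R × R × R) where
  toFun v i := (v (.inl i), v (.inr (.inl i)), v (.inr (.inr i)))
  invFun f := Sum.elim (fun i => (f i).1) (Sum.elim (fun i => (f i).2.1) (fun i => (f i).2.2))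
  left_inv v := by ext (i | i | i) <;> rfl
  right_inv f := rfl

variable [DecidableEq ι]

def arrowheadBlockMatrix (α β s ε τ : ℝ) : Matrix (ι ⊕ ι ⊕ ι) (ι ⊕ ι ⊕ ι) ℝ :=
  fromBlocks (α • 1) (fromCols 0 ((-ε) • 1)) (fromRows 0 ((-ε) • 1))
    (fromBlocks (β • 1) ((-τ) • 1) ((-τ) • 1) (s • 1))

variable {ι}

theorem isHermitian_arrowheadBlockMatrix (α β s ε τ : ℝ) :
    (arrowheadBlockMatrix ι α β s ε τ).IsHermitian := by
  refine .fromBlocks (by simp [IsHermitian]) ?_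
    (.fromBlocks (by simp [IsHermitian]) (by simp) (by simp [IsHermitian]))
  simp [conjTranspose_eq_transpose_of_trivial, transpose_fromCols]

variable [Fintype ι]

theorem dotProduct_arrowheadBlockMatrix_mulVec (α β s ε τ : ℝ) (v : ι ⊕ ι ⊕ ι → ℝ) :
    v ⬝ᵥ (arrowheadBlockMatrix ι α β s ε τ *ᵥ v) =
      ∑ i, arrowheadForm α β s ε τ (sumSumArrowEquiv ι ℝ v i) := by
  simp only [arrowheadBlockMatrix, fromBlocks_mulVec, fromCols_mulVec, fromRows_mulVec,
    smul_mulVec, one_mulVec, zero_mulVec, zero_add, dotProduct, Fintype.sum_sum_type,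
    Sum.elim_inl, Sum.elim_inr, Pi.add_apply, Pi.smul_apply, smul_eq_mul, Pi.zero_apply,
    Function.comp_apply, ← Finset.sum_add_distrib]
  refine Finset.sum_congr rfl fun i _ => ?_
  simp only [arrowheadForm, sumSumArrowEquiv_apply]
  ring

theorem posDef_arrowheadBlockMatrix_iff [Nonempty ι] (α β s ε τ : ℝ) :
    (arrowheadBlockMatrix ι α β s ε τ).PosDef ↔
      ∀ p : ℝ × ℝ × ℝ, p ≠ 0 → 0 < arrowheadForm α β s ε τ p := by
  rw [posDef_iff_dotProduct_mulVec, and_iff_right (isHermitian_arrowheadBlockMatrix α β s ε τ),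
    ← forall_sum_pos_iff (ι := ι) (q := arrowheadForm α β s ε τ) (by simp [arrowheadForm])]
  refine (sumSumArrowEquiv ι ℝ).forall_congr fun v => ?_
  have he : sumSumArrowEquiv ι ℝ 0 = 0 := rfl
  rw [star_trivial, dotProduct_arrowheadBlockMatrix_mulVec,
    (sumSumArrowEquiv ι ℝ).injective.ne_iff' he]

end ArrowheadBlockMatrix

/-- positive definiteness characterization of the block matrix `G₀`
whose blocks are multiples of the `l × l` identity. -/
theorem stmt2 {l : ℕ} (hl : 0 < l)
    (σ ρ s τ ε : ℝ) (hs : s > 0)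
    (G₀ : Matrix (Fin l ⊕ (Fin l ⊕ Fin l)) (Fin l ⊕ (Fin l ⊕ Fin l)) ℝ)
    (hG₀ : G₀ = Matrix.fromBlocks
      ((σ + (ε ^ 2 - 1) / s) • (1 : Matrix (Fin l) (Fin l) ℝ))
      (Matrix.fromCols 0 ((-ε) • (1 : Matrix (Fin l) (Fin l) ℝ)))
      (Matrix.fromRows 0 ((-ε) • (1 : Matrix (Fin l) (Fin l) ℝ)))
      (Matrix.fromBlocks ((ρ + (τ ^ 2 - 1) / s) • (1 : Matrix (Fin l) (Fin l) ℝ))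
        ((-τ) • (1 : Matrix (Fin l) (Fin l) ℝ))
        ((-τ) • (1 : Matrix (Fin l) (Fin l) ℝ))
        (s • (1 : Matrix (Fin l) (Fin l) ℝ)))) :
    G₀.PosDef ↔ (σ - 1 / s > 0 ∧ (σ * s - 1) * (ρ * s - 1) > τ ^ 2 * ε ^ 2) := by
  subst hG₀
  have : Nonempty (Fin l) := ⟨⟨0, hl⟩⟩
  have hα : (σ + (ε ^ 2 - 1) / s) * s - ε ^ 2 = σ * s - 1 := by field_simp; ring
  have hβ : (ρ + (τ ^ 2 - 1) / s) * s - τ ^ 2 = ρ * s - 1 := by field_simp; ring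
  have hσ : σ - 1 / s = (σ * s - 1) / s := by field_simp
  refine (posDef_arrowheadBlockMatrix_iff (ι := Fin l) _ _ s ε τ).trans ?_
  rw [forall_arrowheadForm_pos_iff hs, hα, hβ, hσ, gt_iff_lt, div_pos_iff_of_pos_right hs,
    mul_comm (τ ^ 2)]
end

section
/- Let f : ℝ^m → ℝ and g : ℝ^n → ℝ be convex, X ⊆ ℝ^m, Y ⊆ ℝ^n closed convex, A ∈ ℝ^{l×m}, B ∈ ℝ^{l×n}, c ∈ ℝ^l, τ ≠ 0, M = X × Y × ℝ^l, φ(x, y) = f(x) + g(y), J(x, y, λ) = τ(−Aᵀλ, −Bᵀλ, Ax + By − c), and let G be a symmetric positive definite (m+n+l)×(m+n+l) matrix. Suppose w^{k+1} ∈ M satisfies φ(u) − φ(u^{k+1}) + ⟨w − w^{k+1}, J(w^{k+1}) + G(w^{k+1} − w^k)⟩ ≥ 0 for all w ∈ M, and let w* ∈ M be a solution of the variational inequality, i.e., φ(u) − φ(u*) + ⟨w − w*, J(w*)⟩ ≥ 0 for all w ∈ M. Then ‖w^{k+1} − w*‖_G² ≤ ‖w^k − w*‖_G² − ‖w^{k+1}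 − w^k‖_G². -/
/-!
`J` is affine with skew-symmetric linear part, so `⟨w^{k+1} - w*, J w^{k+1} - J w*⟩ = 0`; hence
adding the proximal inequality at `w*` to the solution inequality at `w^{k+1}` cancels `φ` and
leaves `⟨w^{k+1} - w*, G (w^k - w^{k+1})⟩ ≥ 0`. Expanding
`‖w^k - w*‖_G² = ‖(w^{k+1} - w*) + (w^k - w^{k+1})‖_G²` for the symmetric matrix `G` then gives
the claim.
-/

open Matrix

lemma Matrix.dotProduct_sumElim {α β R : Type*} [Fintype α] [Fintype β]
    [NonUnitalNonAssocSemiring R] (x : α ⊕ β → R) (p : α → R) (q : β → R) :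
    x ⬝ᵥ Sum.elim p q = (x ∘ Sum.inl) ⬝ᵥ p + (x ∘ Sum.inr) ⬝ᵥ q := by
  rw [← sumElim_dotProduct_sumElim, Sum.elim_comp_inl_inr]

section SymmetricQuadraticForm

variable {ι R : Type*} [Fintype ι]

lemma Matrix.IsSymm.dotProduct_mulVec_comm [CommSemiring R] {G : Matrix ι ι R} (hG : G.IsSymm)
    (x y : ι → R) : x ⬝ᵥ G *ᵥ y = y ⬝ᵥ G *ᵥ x := by
  simpa only [hG.eq] using dotProduct_transpose_mulVec G x y

lemma Matrix.IsSymm.dotProduct_mulVec_add_self [CommRing R] {G : Matrix ι ι R} (hG : G.IsSymm)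
    (a b : ι → R) :
    (a + b) ⬝ᵥ G *ᵥ (a + b) = a ⬝ᵥ G *ᵥ a + 2 * (a ⬝ᵥ G *ᵥ b) + b ⬝ᵥ G *ᵥ b := by
  simp only [mulVec_add, add_dotProduct, dotProduct_add, hG.dotProduct_mulVec_comm b a]
  ring

lemma Matrix.IsSymm.dotProduct_mulVec_sub_le_of_nonneg [CommRing R] [LinearOrder R]
    [IsStrictOrderedRing R] {G : Matrix ι ι R} (hG : G.IsSymm) {u v w : ι → R}
    (h : 0 ≤ (v - w) ⬝ᵥ G *ᵥ (u - v)) :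
    (v - w) ⬝ᵥ G *ᵥ (v - w) ≤ (u - w) ⬝ᵥ G *ᵥ (u - w) - (v - u) ⬝ᵥ G *ᵥ (v - u) := by
  have hsplit : u - w = (v - w) + (u - v) := by abel
  have hflip : (v - u) ⬝ᵥ G *ᵥ (v - u) = (u - v) ⬝ᵥ G *ᵥ (u - v) := by
    rw [← neg_sub u v, mulVec_neg, neg_dotProduct, dotProduct_neg, neg_neg]
  rw [hsplit, hG.dotProduct_mulVec_add_self, hflip]
  linarith

end SymmetricQuadraticForm

section ProximalPoint

variable {ι R : Type*} [Fintype ι] [CommRing R] [LinearOrder R] [IsStrictOrderedRing R]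

theorem proximal_step_fejer {M : Set (ι → R)} {φ : (ι → R) → R} {J : (ι → R) → ι → R}
    (hJ : ∀ a ∈ M, ∀ b ∈ M, 0 ≤ (a - b) ⬝ᵥ (J a - J b))
    {G : Matrix ι ι R} (hG : G.IsSymm) {wk wk1 wstar : ι → R} (hwk1 : wk1 ∈ M)
    (hineq : ∀ w ∈ M, φ w - φ wk1 + (w - wk1) ⬝ᵥ (J wk1 + G *ᵥ (wk1 - wk)) ≥ 0)
    (hwstarM : wstar ∈ M) (hwstar : ∀ w ∈ M, φ w - φ wstar + (w - wstar) ⬝ᵥ J wstar ≥ 0) :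
    (wk1 - wstar) ⬝ᵥ G *ᵥ (wk1 - wstar) ≤
      (wk - wstar) ⬝ᵥ G *ᵥ (wk - wstar) - (wk1 - wk) ⬝ᵥ G *ᵥ (wk1 - wk) := by
  refine hG.dotProduct_mulVec_sub_le_of_nonneg ?_
  have hprox := hineq wstar hwstarM
  have hsol := hwstar wk1 hwk1
  have hmono := hJ wk1 hwk1 wstar hwstarM
  rw [← neg_sub wk1 wstar, ← neg_sub wk wk1] at hprox
  simp only [neg_dotProduct, dotProduct_add, mulVec_neg, dotProduct_neg, dotProduct_sub]
    at hprox hmono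
  linarith

end ProximalPoint

section SaddlePointOperator

variable {ι₁ ι₂ ι₃ R : Type*} [Fintype ι₁] [Fintype ι₂] [Fintype ι₃] [CommRing R]

/-- The operator of the Lagrangian saddle point problem of `min φ(x, y)` subject to
`Ax + By = c`, scaled by `τ`. -/
def saddlePointOperator (A : Matrix ι₃ ι₁ R) (B : Matrix ι₃ ι₂ R) (c : ι₃ → R) (τ : R)
    (w : ι₁ ⊕ (ι₂ ⊕ ι₃) → R) : ι₁ ⊕ (ι₂ ⊕ ι₃) → R :=
  Sum.elim (τ • (-(Aᵀ *ᵥ (w ∘ Sum.inr ∘ Sum.inr))))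
    (Sum.elim (τ • (-(Bᵀ *ᵥ (w ∘ Sum.inr ∘ Sum.inr))))
      (τ • (A *ᵥ (w ∘ Sum.inl) + B *ᵥ (w ∘ Sum.inr ∘ Sum.inl) - c)))

lemma saddlePointOperator_skew (A : Matrix ι₃ ι₁ R) (B : Matrix ι₃ ι₂ R) (c : ι₃ → R) (τ : R)
    (a b : ι₁ ⊕ (ι₂ ⊕ ι₃) → R) :
    (a - b) ⬝ᵥ (saddlePointOperator A B c τ a - saddlePointOperator A B c τ b) = 0 := by
  simp only [saddlePointOperator, dotProduct_sub, dotProduct_sumElim, Function.comp_assoc,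
    dotProduct_smul, dotProduct_neg, dotProduct_add, dotProduct_transpose_mulVec, sub_dotProduct,
    smul_eq_mul]
  ring

end SaddlePointOperator

theorem stmt8_general {m n l : ℕ}
    (A : Matrix (Fin l) (Fin m) ℝ) (B : Matrix (Fin l) (Fin n) ℝ)
    (c : Fin l → ℝ) (τ : ℝ)
    (M : Set ((Fin m ⊕ (Fin n ⊕ Fin l)) → ℝ))
    (φ : ((Fin m ⊕ (Fin n ⊕ Fin l)) → ℝ) → ℝ)
    (J : ((Fin m ⊕ (Fin n ⊕ Fin l)) → ℝ) → ((Fin m ⊕ (Fin n ⊕ Fin l)) → ℝ))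
    (hJ : J = fun w => Sum.elim (τ • (-(Aᵀ *ᵥ (w ∘ Sum.inr ∘ Sum.inr))))
        (Sum.elim (τ • (-(Bᵀ *ᵥ (w ∘ Sum.inr ∘ Sum.inr))))
          (τ • (A *ᵥ (w ∘ Sum.inl) + B *ᵥ (w ∘ Sum.inr ∘ Sum.inl) - c))))
    (G : Matrix (Fin m ⊕ (Fin n ⊕ Fin l)) (Fin m ⊕ (Fin n ⊕ Fin l)) ℝ)
    (hG : G.PosDef)
    (wk wk1 : (Fin m ⊕ (Fin n ⊕ Fin l)) → ℝ) (hwk1 : wk1 ∈ M)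
    (hineq : ∀ w ∈ M,
      φ w - φ wk1 + (w - wk1) ⬝ᵥ (J wk1 + G *ᵥ (wk1 - wk)) ≥ 0)
    (wstar : (Fin m ⊕ (Fin n ⊕ Fin l)) → ℝ) (hwstarM : wstar ∈ M)
    (hwstar : ∀ w ∈ M, φ w - φ wstar + (w - wstar) ⬝ᵥ J wstar ≥ 0) :
    (wk1 - wstar) ⬝ᵥ (G *ᵥ (wk1 - wstar)) ≤
      (wk - wstar) ⬝ᵥ (G *ᵥ (wk - wstar)) - (wk1 - wk) ⬝ᵥ (G *ᵥ (wk1 - wk)) := by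
  have hJ_eq : J = saddlePointOperator A B c τ := hJ
  have hG_symm : G.IsSymm := isHermitian_iff_isSymm.mp hG.isHermitian
  refine proximal_step_fejer (fun a _ b _ => ?_) hG_symm hwk1 hineq hwstarM hwstar
  rw [hJ_eq, saddlePointOperator_skew]

/-- Fejér-type contraction of the proximal point iteration
with respect to the `G`-norm. -/
theorem stmt8 {m n l : ℕ}
    (f : (Fin m → ℝ) → ℝ) (g : (Fin n → ℝ) → ℝ)
    (hf : ConvexOn ℝ Set.univ f) (hg : ConvexOn ℝ Set.univ g)
    (X : Set (Fin m → ℝ)) (Y : Set (Fin n → ℝ))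
    (hXcl : IsClosed X) (hXcv : Convex ℝ X) (hYcl : IsClosed Y) (hYcv : Convex ℝ Y)
    (A : Matrix (Fin l) (Fin m) ℝ) (B : Matrix (Fin l) (Fin n) ℝ)
    (c : Fin l → ℝ) (τ : ℝ) (hτ : τ ≠ 0)
    (M : Set ((Fin m ⊕ (Fin n ⊕ Fin l)) → ℝ))
    (hM : M = {w | (w ∘ Sum.inl) ∈ X ∧ (w ∘ Sum.inr ∘ Sum.inl) ∈ Y})
    (φ : ((Fin m ⊕ (Fin n ⊕ Fin l)) → ℝ) → ℝ)
    (hφ : φ = fun w => f (w ∘ Sum.inl) + g (w ∘ Sum.inr ∘ Sum.inl))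
    (J : ((Fin m ⊕ (Fin n ⊕ Fin l)) → ℝ) → ((Fin m ⊕ (Fin n ⊕ Fin l)) → ℝ))
    (hJ : J = fun w => Sum.elim (τ • (-(Aᵀ *ᵥ (w ∘ Sum.inr ∘ Sum.inr))))
        (Sum.elim (τ • (-(Bᵀ *ᵥ (w ∘ Sum.inr ∘ Sum.inr))))
          (τ • (A *ᵥ (w ∘ Sum.inl) + B *ᵥ (w ∘ Sum.inr ∘ Sum.inl) - c))))
    (G : Matrix (Fin m ⊕ (Fin n ⊕ Fin l)) (Fin m ⊕ (Fin n ⊕ Fin l)) ℝ)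
    (hG : G.PosDef)
    (wk wk1 : (Fin m ⊕ (Fin n ⊕ Fin l)) → ℝ) (hwk1 : wk1 ∈ M)
    (hineq : ∀ w ∈ M,
      φ w - φ wk1 + (w - wk1) ⬝ᵥ (J wk1 + G *ᵥ (wk1 - wk)) ≥ 0)
    (wstar : (Fin m ⊕ (Fin n ⊕ Fin l)) → ℝ) (hwstarM : wstar ∈ M)
    (hwstar : ∀ w ∈ M, φ w - φ wstar + (w - wstar) ⬝ᵥ J wstar ≥ 0) :
    (wk1 - wstar) ⬝ᵥ (G *ᵥ (wk1 - wstar)) ≤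
      (wk - wstar) ⬝ᵥ (G *ᵥ (wk - wstar)) - (wk1 - wk) ⬝ᵥ (G *ᵥ (wk1 - wk)) :=
  stmt8_general A B c τ M φ J hJ G hG wk wk1 hwk1 hineq wstar hwstarM hwstar
end

section
/- Let f : ℝ^m → ℝ and g : ℝ^n → ℝ be convex (hence continuous), X ⊆ ℝ^m, Y ⊆ ℝ^n closed convex, A ∈ ℝ^{l×m}, B ∈ ℝ^{l×n}, c ∈ ℝ^l, τ ≠ 0, M = X × Y × ℝ^l, φ(x, y) = f(x) + g(y), J(x, y, λ) = τ(−Aᵀλ, −Bᵀλ, Ax + By − c), and let G be a symmetric positive definite (m+n+l)×(m+n+l) matrix. Suppose the solution set M* = {w* ∈ M : φ(u) − φ(u*) + ⟨w − w*, J(w*)⟩ ≥ 0 for all w ∈ M} is nonempty, and let {w^k} ⊆ ℝ^{m+n+l} be a sequence with w^{k+1} ∈ M such that for every k ≥ 0, φ(u) − φ(u^{k+1}) + ⟨w − w^{k+1}, J(w^{k+1}) + G(w^{k+1} − w^k)⟩ ≥ 0 for all w ∈ M. Then there exists w^∞ ∈ M* such that w^k → w^∞ as k → ∞. -/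
/-!
The iteration is a proximal point method in the metric of `G`. Adding the defining inequality
of `w^{k+1}`, tested at a solution `w*`, to that of `w*`, tested at `w^{k+1}`, and using that `J`
is monotone (its linear part is skew-symmetric) gives the Fejér inequality
`‖w^{k+1} - w*‖_G² + ‖w^{k+1} - w^k‖_G² ≤ ‖w^k - w*‖_G²`. So the iterates are bounded and
`w^{k+1} - w^k → 0`; hence a cluster point exists and, passing to the limit in the defining
inequality, it lies in `M*`. The `G`-distance to this cluster point is nonincreasing and tends to
zero along a subsequence, so the whole sequence converges to it.
-/

open Matrix Filter Topology

namespace Matrix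

variable {ι : Type*} [Fintype ι]

theorem IsSymm.dotProduct_mulVec_comm_s9 {G : Matrix ι ι ℝ} (hG : G.IsSymm) (a b : ι → ℝ) :
    a ⬝ᵥ (G *ᵥ b) = b ⬝ᵥ (G *ᵥ a) := by
  rw [dotProduct_mulVec, ← mulVec_transpose, hG.eq, dotProduct_comm]

theorem IsSymm.dotProduct_mulVec_sub_sub {G : Matrix ι ι ℝ} (hG : G.IsSymm) (a b : ι → ℝ) :
    (a - b) ⬝ᵥ (G *ᵥ (a - b)) = a ⬝ᵥ (G *ᵥ a) - 2 * (a ⬝ᵥ (G *ᵥ b)) + b ⬝ᵥ (G *ᵥ b) := by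
  rw [mulVec_sub, sub_dotProduct, dotProduct_sub, dotProduct_sub, hG.dotProduct_mulVec_comm_s9 b a]
  ring

theorem continuous_dotProduct_mulVec_self (G : Matrix ι ι ℝ) :
    Continuous fun v : ι → ℝ => v ⬝ᵥ (G *ᵥ v) :=
  continuous_id.dotProduct (continuous_const.matrix_mulVec continuous_id)

theorem PosDef.exists_mul_norm_sq_le {G : Matrix ι ι ℝ} (hG : G.PosDef) :
    ∃ c > 0, ∀ v : ι → ℝ, c * ‖v‖ ^ 2 ≤ v ⬝ᵥ (G *ᵥ v) := by
  rcases isEmpty_or_nonempty ι with hι | hι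
  · exact ⟨1, one_pos, fun v => by simp [Subsingleton.elim v 0]⟩
  obtain ⟨v₀, hv₀, hmin⟩ := (isCompact_sphere (0 : ι → ℝ) 1).exists_isMinOn
    (NormedSpace.sphere_nonempty.2 zero_le_one) (continuous_dotProduct_mulVec_self G).continuousOn
  refine ⟨v₀ ⬝ᵥ (G *ᵥ v₀), hG.dotProduct_mulVec_pos (ne_zero_of_mem_unit_sphere ⟨v₀, hv₀⟩),
    fun v => ?_⟩
  rcases eq_or_ne v 0 with rfl | hv
  · simp
  have hnv : 0 < ‖v‖ := norm_pos_iff.2 hv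
  have hu : ‖v‖⁻¹ • v ∈ Metric.sphere (0 : ι → ℝ) 1 := by
    simp [norm_smul, hnv.ne']
  have hscale : (‖v‖⁻¹ • v) ⬝ᵥ (G *ᵥ (‖v‖⁻¹ • v)) = (v ⬝ᵥ (G *ᵥ v)) / ‖v‖ ^ 2 := by
    rw [mulVec_smul, smul_dotProduct, dotProduct_smul, smul_eq_mul, smul_eq_mul]
    field_simp
  have hle : v₀ ⬝ᵥ (G *ᵥ v₀) ≤ (‖v‖⁻¹ • v) ⬝ᵥ (G *ᵥ (‖v‖⁻¹ • v)) := hmin hu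
  rwa [hscale, le_div_iff₀ (by positivity)] at hle

theorem PosDef.tendsto_zero_of_dotProduct_mulVec {G : Matrix ι ι ℝ} (hG : G.PosDef)
    {α : Type*} {l : Filter α} {v : α → ι → ℝ}
    (hv : Tendsto (fun k => v k ⬝ᵥ (G *ᵥ v k)) l (𝓝 0)) : Tendsto v l (𝓝 0) := by
  obtain ⟨c, hc, hcoer⟩ := hG.exists_mul_norm_sq_le
  have hsq : Tendsto (fun k => ‖v k‖ ^ 2) l (𝓝 0) := by
    refine squeeze_zero (fun k => sq_nonneg _) (fun k => ?_) (by simpa using hv.div_const c)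
    rw [le_div_iff₀ hc, mul_comm]
    exact hcoer _
  rw [tendsto_zero_iff_norm_tendsto_zero]
  simpa using hsq.sqrt

theorem PosDef.exists_tendsto_of_fejer {G : Matrix ι ι ℝ} (hG : G.PosDef) {S : Set (ι → ℝ)}
    (hS : S.Nonempty) {w : ℕ → ι → ℝ}
    (hfejer : ∀ s ∈ S, Antitone fun k => (w k - s) ⬝ᵥ (G *ᵥ (w k - s)))
    (hcluster : ∀ (ψ : ℕ → ℕ) (x : ι → ℝ), StrictMono ψ →
      Tendsto (w ∘ ψ) atTop (𝓝 x) → x ∈ S) :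
    ∃ x ∈ S, Tendsto w atTop (𝓝 x) := by
  obtain ⟨s, hs⟩ := hS
  obtain ⟨c, hc, hcoer⟩ := hG.exists_mul_norm_sq_le
  have hbdd : ∀ k, w k ∈ Metric.closedBall s √((w 0 - s) ⬝ᵥ (G *ᵥ (w 0 - s)) / c) := by
    intro k
    rw [Metric.mem_closedBall, dist_eq_norm]
    refine Real.le_sqrt_of_sq_le ?_
    rw [le_div_iff₀ hc, mul_comm]
    exact (hcoer _).trans (hfejer s hs (Nat.zero_le k))
  obtain ⟨x, -, ψ, hψ, hx⟩ := tendsto_subseq_of_bounded Metric.isBounded_closedBall hbdd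
  have hxS := hcluster ψ x hψ hx
  refine ⟨x, hxS, ?_⟩
  have hsub : Tendsto (fun j => (w (ψ j) - x) ⬝ᵥ (G *ᵥ (w (ψ j) - x))) atTop (𝓝 0) := by
    have h := ((continuous_dotProduct_mulVec_self G).tendsto 0).comp
      (tendsto_sub_nhds_zero_iff.2 hx)
    rwa [mulVec_zero, dotProduct_zero] at h
  have hall := (tendsto_iff_tendsto_subseq_of_antitone (hfejer x hxS) hψ.tendsto_atTop).2 hsub
  exact tendsto_sub_nhds_zero_iff.1 (hG.tendsto_zero_of_dotProduct_mulVec hall)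

end Matrix

section ProximalPoint

variable {ι : Type*} [Fintype ι]

def viSolutions (M : Set (ι → ℝ)) (φ : (ι → ℝ) → ℝ) (J : (ι → ℝ) → ι → ℝ) : Set (ι → ℝ) :=
  {wstar ∈ M | ∀ w ∈ M, φ w - φ wstar + (w - wstar) ⬝ᵥ J wstar ≥ 0}

variable {M : Set (ι → ℝ)} {φ : (ι → ℝ) → ℝ} {J : (ι → ℝ) → ι → ℝ} {G : Matrix ι ι ℝ}

theorem proxStep_fejer (hG : G.IsSymm) (hJ : ∀ a b, 0 ≤ (a - b) ⬝ᵥ (J a - J b))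
    {wstar w w' : ι → ℝ} (hstar : wstar ∈ viSolutions M φ J) (hw'M : w' ∈ M)
    (hstep : ∀ v ∈ M, φ v - φ w' + (v - w') ⬝ᵥ (J w' + G *ᵥ (w' - w)) ≥ 0) :
    (w' - wstar) ⬝ᵥ (G *ᵥ (w' - wstar)) + (w' - w) ⬝ᵥ (G *ᵥ (w' - w)) ≤
      (w - wstar) ⬝ᵥ (G *ᵥ (w - wstar)) := by
  have h1 := hstep wstar hstar.1
  have h2 := hstar.2 w' hw'M
  have h3 := hJ wstar w'
  have hcross : 0 ≤ (wstar - w') ⬝ᵥ (G *ᵥ (w' - w)) := by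
    rw [dotProduct_add] at h1
    rw [dotProduct_sub] at h3
    have hswap : (w' - wstar) ⬝ᵥ J wstar = -((wstar - w') ⬝ᵥ J wstar) := by
      rw [← neg_dotProduct, neg_sub]
    linarith
  have hexp := hG.dotProduct_mulVec_sub_sub (w' - wstar) (w' - w)
  rw [sub_sub_sub_cancel_left] at hexp
  rw [← neg_sub w' wstar, neg_dotProduct] at hcross
  linarith

theorem mem_viSolutions_of_tendsto_subseq (hM : IsClosed M) (hφ : Continuous φ)
    (hJ : Continuous J) {w : ℕ → ι → ℝ} (hwM : ∀ k, w (k + 1) ∈ M)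
    (hineq : ∀ k, ∀ v ∈ M,
      φ v - φ (w (k + 1)) + (v - w (k + 1)) ⬝ᵥ (J (w (k + 1)) + G *ᵥ (w (k + 1) - w k)) ≥ 0)
    (hdiff : Tendsto (fun k => w (k + 1) - w k) atTop (𝓝 0))
    {ψ : ℕ → ℕ} (hψ : Tendsto ψ atTop atTop) {x : ι → ℝ}
    (hx : Tendsto (w ∘ ψ) atTop (𝓝 x)) : x ∈ viSolutions M φ J := by
  have hdψ : Tendsto (fun j => w (ψ j + 1) - w (ψ j)) atTop (𝓝 0) := hdiff.comp hψ
  have hx' : Tendsto (fun j => w (ψ j + 1)) atTop (𝓝 x) := by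
    simpa using hx.add hdψ
  refine ⟨hM.mem_of_tendsto hx' (Eventually.of_forall fun j => hwM (ψ j)), fun v hv => ?_⟩
  have hΦ : Continuous fun p : (ι → ℝ) × (ι → ℝ) =>
      φ v - φ p.1 + (v - p.1) ⬝ᵥ (J p.1 + G *ᵥ p.2) :=
    (continuous_const.sub (hφ.comp continuous_fst)).add
      ((continuous_const.sub continuous_fst).dotProduct
        ((hJ.comp continuous_fst).add (continuous_const.matrix_mulVec continuous_snd)))
  have hlim := (hΦ.tendsto (x, 0)).comp (hx'.prodMk_nhds hdψ)
  simpa using ge_of_tendsto' hlim fun j => hineq (ψ j) v hv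

theorem exists_tendsto_of_proxPoint (hG : G.PosDef) (hM : IsClosed M) (hφ : Continuous φ)
    (hJc : Continuous J) (hJ : ∀ a b, 0 ≤ (a - b) ⬝ᵥ (J a - J b))
    (hne : (viSolutions M φ J).Nonempty) {w : ℕ → ι → ℝ} (hwM : ∀ k, w (k + 1) ∈ M)
    (hineq : ∀ k, ∀ v ∈ M,
      φ v - φ (w (k + 1)) + (v - w (k + 1)) ⬝ᵥ (J (w (k + 1)) + G *ᵥ (w (k + 1) - w k)) ≥ 0) :
    ∃ x ∈ viSolutions M φ J, Tendsto w atTop (𝓝 x) := by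
  have hq : ∀ v : ι → ℝ, 0 ≤ v ⬝ᵥ (G *ᵥ v) := hG.posSemidef.dotProduct_mulVec_nonneg
  have hstep := fun s (hs : s ∈ viSolutions M φ J) k =>
    proxStep_fejer (isHermitian_iff_isSymm.1 hG.isHermitian) hJ hs (hwM k) (hineq k)
  have hanti : ∀ s ∈ viSolutions M φ J, Antitone fun k => (w k - s) ⬝ᵥ (G *ᵥ (w k - s)) :=
    fun s hs => antitone_nat_of_succ_le fun k =>
      (le_add_of_nonneg_right (hq _)).trans (hstep s hs k)
  have hdiff : Tendsto (fun k => w (k + 1) - w k) atTop (𝓝 0) := by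
    obtain ⟨s, hs⟩ := hne
    have hlim := tendsto_atTop_ciInf (hanti s hs) ⟨0, by rintro _ ⟨k, rfl⟩; exact hq _⟩
    refine hG.tendsto_zero_of_dotProduct_mulVec (squeeze_zero (fun k => hq _)
      (fun k => le_sub_iff_add_le'.2 (hstep s hs k)) ?_)
    simpa using hlim.sub (hlim.comp (tendsto_add_atTop_nat 1))
  exact hG.exists_tendsto_of_fejer hne hanti fun ψ x hψ hx =>
    mem_viSolutions_of_tendsto_subseq hM hφ hJc hwM hineq hdiff hψ.tendsto_atTop hx

end ProximalPoint

section SaddlePoint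

variable {α β γ : Type*} [Fintype α] [Fintype β] [Fintype γ]

def saddleOperator (A : Matrix γ α ℝ) (B : Matrix γ β ℝ) (c : γ → ℝ) (τ : ℝ)
    (w : α ⊕ (β ⊕ γ) → ℝ) : α ⊕ (β ⊕ γ) → ℝ :=
  Sum.elim (τ • (-(Aᵀ *ᵥ (w ∘ Sum.inr ∘ Sum.inr))))
    (Sum.elim (τ • (-(Bᵀ *ᵥ (w ∘ Sum.inr ∘ Sum.inr))))
      (τ • (A *ᵥ (w ∘ Sum.inl) + B *ᵥ (w ∘ Sum.inr ∘ Sum.inl) - c)))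

theorem continuous_saddleOperator (A : Matrix γ α ℝ) (B : Matrix γ β ℝ) (c : γ → ℝ) (τ : ℝ) :
    Continuous (saddleOperator A B c τ) := by
  refine continuous_pi fun i => ?_
  rcases i with i | i | i <;> simp only [saddleOperator, Sum.elim_inl, Sum.elim_inr] <;> fun_prop

theorem sub_dotProduct_saddleOperator_sub (A : Matrix γ α ℝ) (B : Matrix γ β ℝ) (c : γ → ℝ)
    (τ : ℝ) (a b : α ⊕ (β ⊕ γ) → ℝ) :
    (a - b) ⬝ᵥ (saddleOperator A B c τ a - saddleOperator A B c τ b) = 0 := by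
  set x := a ∘ Sum.inl - b ∘ Sum.inl
  set y := a ∘ Sum.inr ∘ Sum.inl - b ∘ Sum.inr ∘ Sum.inl
  set z := a ∘ Sum.inr ∘ Sum.inr - b ∘ Sum.inr ∘ Sum.inr
  have hd : a - b = Sum.elim x (Sum.elim y z) := by ext (i | i | i) <;> rfl
  have hJ : saddleOperator A B c τ a - saddleOperator A B c τ b =
      Sum.elim (τ • -(Aᵀ *ᵥ z)) (Sum.elim (τ • -(Bᵀ *ᵥ z)) (τ • (A *ᵥ x + B *ᵥ y))) := by
    ext (i | i | i) <;>
      simp only [saddleOperator, smul_neg, Pi.sub_apply, Pi.add_apply, Sum.elim_inl,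
        Sum.elim_inr, Pi.neg_apply, Pi.smul_apply, smul_eq_mul, sub_neg_eq_add, mulVec_sub,
        neg_sub, smul_add, x, y, z] <;>
      ring
  rw [hJ, hd, sumElim_dotProduct_sumElim, sumElim_dotProduct_sumElim]
  simp only [dotProduct_smul, dotProduct_neg, dotProduct_add, dotProduct_transpose_mulVec,
    smul_eq_mul]
  ring

end SaddlePoint

theorem stmt9_general {m n l : ℕ}
    (f : (Fin m → ℝ) → ℝ) (g : (Fin n → ℝ) → ℝ)
    (hf : ConvexOn ℝ Set.univ f) (hg : ConvexOn ℝ Set.univ g)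
    (X : Set (Fin m → ℝ)) (Y : Set (Fin n → ℝ))
    (hXcl : IsClosed X) (hYcl : IsClosed Y)
    (A : Matrix (Fin l) (Fin m) ℝ) (B : Matrix (Fin l) (Fin n) ℝ)
    (c : Fin l → ℝ) (τ : ℝ)
    (M : Set ((Fin m ⊕ (Fin n ⊕ Fin l)) → ℝ))
    (hM : M = {w | (w ∘ Sum.inl) ∈ X ∧ (w ∘ Sum.inr ∘ Sum.inl) ∈ Y})
    (φ : ((Fin m ⊕ (Fin n ⊕ Fin l)) → ℝ) → ℝ)
    (hφ : φ = fun w => f (w ∘ Sum.inl) + g (w ∘ Sum.inr ∘ Sum.inl))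
    (J : ((Fin m ⊕ (Fin n ⊕ Fin l)) → ℝ) → ((Fin m ⊕ (Fin n ⊕ Fin l)) → ℝ))
    (hJ : J = fun w => Sum.elim (τ • (-(Aᵀ *ᵥ (w ∘ Sum.inr ∘ Sum.inr))))
        (Sum.elim (τ • (-(Bᵀ *ᵥ (w ∘ Sum.inr ∘ Sum.inr))))
          (τ • (A *ᵥ (w ∘ Sum.inl) + B *ᵥ (w ∘ Sum.inr ∘ Sum.inl) - c))))
    (G : Matrix (Fin m ⊕ (Fin n ⊕ Fin l)) (Fin m ⊕ (Fin n ⊕ Fin l)) ℝ)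
    (hG : G.PosDef)
    (Mstar : Set ((Fin m ⊕ (Fin n ⊕ Fin l)) → ℝ))
    (hMstar : Mstar =
      {wstar ∈ M | ∀ w ∈ M, φ w - φ wstar + (w - wstar) ⬝ᵥ J wstar ≥ 0})
    (hMstarne : Mstar.Nonempty)
    (w : ℕ → ((Fin m ⊕ (Fin n ⊕ Fin l)) → ℝ))
    (hwM : ∀ k : ℕ, w (k + 1) ∈ M)
    (hineq : ∀ k : ℕ, ∀ v ∈ M,
      φ v - φ (w (k + 1)) +
        (v - w (k + 1)) ⬝ᵥ (J (w (k + 1)) + G *ᵥ (w (k + 1) - w k)) ≥ 0) :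
    ∃ winf ∈ Mstar, Filter.Tendsto w Filter.atTop (nhds winf) := by
  have hJ' : J = saddleOperator A B c τ := hJ
  subst hM hφ hMstar hJ'
  have hMcl : IsClosed {w : Fin m ⊕ (Fin n ⊕ Fin l) → ℝ |
      w ∘ Sum.inl ∈ X ∧ w ∘ Sum.inr ∘ Sum.inl ∈ Y} :=
    (hXcl.preimage (by fun_prop)).inter (hYcl.preimage (by fun_prop))
  have hφc : Continuous fun w : Fin m ⊕ (Fin n ⊕ Fin l) → ℝ =>
      f (w ∘ Sum.inl) + g (w ∘ Sum.inr ∘ Sum.inl) :=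
    (hf.locallyLipschitz.continuous.comp (by fun_prop)).add
      (hg.locallyLipschitz.continuous.comp (by fun_prop))
  exact exists_tendsto_of_proxPoint hG hMcl hφc (continuous_saddleOperator A B c τ)
    (fun a b => (sub_dotProduct_saddleOperator_sub A B c τ a b).ge) hMstarne hwM hineq

/-- global convergence of the parameterized proximal point iteration
to a solution of the variational inequality. -/
theorem stmt9 {m n l : ℕ}
    (f : (Fin m → ℝ) → ℝ) (g : (Fin n → ℝ) → ℝ)
    (hf : ConvexOn ℝ Set.univ f) (hg : ConvexOn ℝ Set.univ g)
    (X : Set (Fin m → ℝ)) (Y : Set (Fin n → ℝ))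
    (hXcl : IsClosed X) (hXcv : Convex ℝ X) (hYcl : IsClosed Y) (hYcv : Convex ℝ Y)
    (A : Matrix (Fin l) (Fin m) ℝ) (B : Matrix (Fin l) (Fin n) ℝ)
    (c : Fin l → ℝ) (τ : ℝ) (hτ : τ ≠ 0)
    (M : Set ((Fin m ⊕ (Fin n ⊕ Fin l)) → ℝ))
    (hM : M = {w | (w ∘ Sum.inl) ∈ X ∧ (w ∘ Sum.inr ∘ Sum.inl) ∈ Y})
    (φ : ((Fin m ⊕ (Fin n ⊕ Fin l)) → ℝ) → ℝ)
    (hφ : φ = fun w => f (w ∘ Sum.inl) + g (w ∘ Sum.inr ∘ Sum.inl))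
    (J : ((Fin m ⊕ (Fin n ⊕ Fin l)) → ℝ) → ((Fin m ⊕ (Fin n ⊕ Fin l)) → ℝ))
    (hJ : J = fun w => Sum.elim (τ • (-(Aᵀ *ᵥ (w ∘ Sum.inr ∘ Sum.inr))))
        (Sum.elim (τ • (-(Bᵀ *ᵥ (w ∘ Sum.inr ∘ Sum.inr))))
          (τ • (A *ᵥ (w ∘ Sum.inl) + B *ᵥ (w ∘ Sum.inr ∘ Sum.inl) - c))))
    (G : Matrix (Fin m ⊕ (Fin n ⊕ Fin l)) (Fin m ⊕ (Fin n ⊕ Fin l)) ℝ)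
    (hG : G.PosDef)
    (Mstar : Set ((Fin m ⊕ (Fin n ⊕ Fin l)) → ℝ))
    (hMstar : Mstar =
      {wstar ∈ M | ∀ w ∈ M, φ w - φ wstar + (w - wstar) ⬝ᵥ J wstar ≥ 0})
    (hMstarne : Mstar.Nonempty)
    (w : ℕ → ((Fin m ⊕ (Fin n ⊕ Fin l)) → ℝ))
    (hwM : ∀ k : ℕ, w (k + 1) ∈ M)
    (hineq : ∀ k : ℕ, ∀ v ∈ M,
      φ v - φ (w (k + 1)) +
        (v - w (k + 1)) ⬝ᵥ (J (w (k + 1)) + G *ᵥ (w (k + 1) - w k)) ≥ 0) :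
    ∃ winf ∈ Mstar, Filter.Tendsto w Filter.atTop (nhds winf) :=
  stmt9_general f g hf hg X Y hXcl hYcl A B c τ M hM φ hφ J hJ G hG Mstar hMstar hMstarne w hwM
    hineq
end

section
/- Let G be a symmetric positive definite N×N real matrix, let S ⊆ ℝ^N be nonempty, and let {w^k} ⊆ ℝ^N be a sequence such that for every w* ∈ S and every k ≥ 0, ‖w^{k+1} − w*‖_G² ≤ ‖w^k − w*‖_G² − ‖w^{k+1} − w^k‖_G². Then the sequence {w^k} is bounded and ‖w^k − w^{k+1}‖ → 0 as k → ∞; moreover, if some accumulation point w^∞ of {w^k} lies in S, then the whole sequence converges to w^∞. -/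
/-!
For `s ∈ S` the distances `d k = ‖w k - s‖_G²` decrease, hence converge. Since `‖·‖_G²`
dominates `c ‖·‖²` for some `c > 0`, the sequence stays in a ball around `s`, and the extra
decrease gives `‖w (k+1) - w k‖_G² ≤ d k - d (k+1) → 0`. If `s ∈ S` is a cluster point of `w`,
then `0 = ‖s - s‖_G²` is a cluster value of `d`, so the limit of `d` is `0`.
-/

open Matrix Filter Topology

theorem exists_pos_mul_sq_norm_le_of_homogeneous {E : Type*} [NormedAddCommGroup E]
    [NormedSpace ℝ E] [FiniteDimensional ℝ E] {q : E → ℝ} (hq : Continuous q)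
    (hsmul : ∀ (t : ℝ) (v : E), q (t • v) = t ^ 2 * q v) (hpos : ∀ v ≠ 0, 0 < q v) :
    ∃ c > 0, ∀ v, c * ‖v‖ ^ 2 ≤ q v := by
  have hq0 : q 0 = 0 := by simpa using hsmul 0 0
  rcases subsingleton_or_nontrivial E with hE | hE
  · exact ⟨1, one_pos, fun v => by simp [Subsingleton.elim v 0, hq0]⟩
  obtain ⟨u₀, hu₀, hmin⟩ := (isCompact_sphere (0 : E) 1).exists_isMinOn
    (NormedSpace.sphere_nonempty.mpr zero_le_one) hq.continuousOn
  refine ⟨q u₀, hpos u₀ (ne_zero_of_mem_unit_sphere ⟨u₀, hu₀⟩), fun v => ?_⟩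
  rcases eq_or_ne v 0 with rfl | hv
  · simp [hq0]
  have hv' : ‖v‖ ≠ 0 := norm_ne_zero_iff.mpr hv
  have hunit : ‖v‖⁻¹ • v ∈ Metric.sphere (0 : E) 1 := by
    simp [norm_smul, hv']
  calc q u₀ * ‖v‖ ^ 2 ≤ q (‖v‖⁻¹ • v) * ‖v‖ ^ 2 := by gcongr; exact hmin hunit
    _ = q v := by rw [hsmul]; field_simp

theorem Matrix.continuous_dotProduct_mulVec {n : Type*} [Fintype n] (G : Matrix n n ℝ) :
    Continuous fun v : n → ℝ => v ⬝ᵥ (G *ᵥ v) :=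
  continuous_id.dotProduct (continuous_const.matrix_mulVec continuous_id)

theorem Matrix.PosDef.exists_pos_mul_sq_norm_le_dotProduct_mulVec {n : Type*} [Fintype n]
    {G : Matrix n n ℝ} (hG : G.PosDef) :
    ∃ c > 0, ∀ v : n → ℝ, c * ‖v‖ ^ 2 ≤ v ⬝ᵥ (G *ᵥ v) :=
  exists_pos_mul_sq_norm_le_of_homogeneous G.continuous_dotProduct_mulVec
    (fun t v => by simp only [mulVec_smul, smul_dotProduct, dotProduct_smul, smul_eq_mul]; ring)
    (fun _ hv => hG.dotProduct_mulVec_pos hv)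

theorem tendsto_norm_zero_of_mul_sq_norm_le {ι E : Type*} [SeminormedAddCommGroup E]
    {l : Filter ι} {q : E → ℝ} {c : ℝ} (hc : 0 < c) (hcoer : ∀ v, c * ‖v‖ ^ 2 ≤ q v)
    {u : ι → E} (hu : Tendsto (fun i => q (u i)) l (𝓝 0)) :
    Tendsto (fun i => ‖u i‖) l (𝓝 0) := by
  have hsqrt : Tendsto (fun i => √(q (u i) / c)) l (𝓝 0) := by
    simpa using (hu.div_const c).sqrt
  refine squeeze_zero (fun _ => norm_nonneg _) (fun i => Real.le_sqrt_of_sq_le ?_) hsqrt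
  rw [le_div_iff₀ hc, mul_comm]
  exact hcoer (u i)

theorem MapClusterPt.eq_of_tendsto {α X : Type*} [TopologicalSpace X] [T2Space X]
    {l : Filter α} {u : α → X} {x y : X} (h : MapClusterPt x l u) (hy : Tendsto u l (𝓝 y)) :
    x = y :=
  eq_of_nhds_neBot (h.neBot.mono (inf_le_inf_left _ hy))

/-- He and Yuan's strict contraction of an iteration `w` with respect to a solution set `S`,
with `q` in the role of `‖·‖_G²`. -/
def IsStrictlyContractive {E : Type*} [AddCommGroup E] (q : E → ℝ) (S : Set E) (w : ℕ → E) :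
    Prop :=
  ∀ s ∈ S, ∀ k, q (w (k + 1) - s) ≤ q (w k - s) - q (w (k + 1) - w k)

namespace IsStrictlyContractive

variable {E : Type*} [NormedAddCommGroup E] {q : E → ℝ} {S : Set E} {w : ℕ → E} {s : E}

theorem antitone (h : IsStrictlyContractive q S w) (hq : ∀ v, 0 ≤ q v) (hs : s ∈ S) :
    Antitone fun k => q (w k - s) :=
  antitone_nat_of_succ_le fun k => by linarith [h s hs k, hq (w (k + 1) - w k)]

theorem tendsto_iInf (h : IsStrictlyContractive q S w) (hq : ∀ v, 0 ≤ q v) (hs : s ∈ S) :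
    Tendsto (fun k => q (w k - s)) atTop (𝓝 (⨅ k, q (w k - s))) :=
  tendsto_atTop_ciInf (h.antitone hq hs) ⟨0, by rintro _ ⟨k, rfl⟩; exact hq _⟩

theorem tendsto_sub_succ (h : IsStrictlyContractive q S w) (hq : ∀ v, 0 ≤ q v) (hs : s ∈ S) :
    Tendsto (fun k => q (w (k + 1) - w k)) atTop (𝓝 0) := by
  have hL := h.tendsto_iInf hq hs
  refine squeeze_zero (fun k => hq _) (fun k => ?_)
    (by simpa using hL.sub (hL.comp (tendsto_add_atTop_nat 1)))
  linarith [h s hs k]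

theorem tendsto_zero_of_mapClusterPt (h : IsStrictlyContractive q S w) (hq : ∀ v, 0 ≤ q v)
    (hq0 : Tendsto q (𝓝 0) (𝓝 0)) (hs : s ∈ S) (hcl : MapClusterPt s atTop w) :
    Tendsto (fun k => q (w k - s)) atTop (𝓝 0) := by
  have hcl' : MapClusterPt 0 atTop fun k => q (w k - s) :=
    hcl.tendsto_comp (f := fun v => q (v - s)) (hq0.comp (tendsto_sub_nhds_zero_iff.2 tendsto_id))
  have hL := h.tendsto_iInf hq hs
  rwa [← hcl'.eq_of_tendsto hL] at hL

theorem isBounded_range (h : IsStrictlyContractive q S w) {c : ℝ} (hc : 0 < c)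
    (hcoer : ∀ v, c * ‖v‖ ^ 2 ≤ q v) (hs : s ∈ S) : Bornology.IsBounded (Set.range w) := by
  have hq v : 0 ≤ q v := (mul_nonneg hc.le (sq_nonneg _)).trans (hcoer v)
  refine (Metric.isBounded_iff_subset_closedBall s).2 ⟨√(q (w 0 - s) / c), ?_⟩
  rintro _ ⟨k, rfl⟩
  rw [Metric.mem_closedBall, dist_eq_norm]
  refine Real.le_sqrt_of_sq_le ((le_div_iff₀ hc).2 ?_)
  rw [mul_comm]
  exact (hcoer _).trans (h.antitone hq hs k.zero_le)

end IsStrictlyContractive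

/-- a sequence which is Fejér-monotone in the `G`-norm (G positive
definite) with respect to a nonempty set `S` is bounded, its successive
differences tend to zero, and it converges to any of its accumulation points
lying in `S`. -/
theorem stmt17 {N : ℕ} (G : Matrix (Fin N) (Fin N) ℝ) (hG : G.PosDef)
    (S : Set (Fin N → ℝ)) (hS : S.Nonempty)
    (w : ℕ → (Fin N → ℝ))
    (hfejer : ∀ wstar ∈ S, ∀ k : ℕ,
      (w (k + 1) - wstar) ⬝ᵥ (G *ᵥ (w (k + 1) - wstar)) ≤
        (w k - wstar) ⬝ᵥ (G *ᵥ (w k - wstar)) -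
          (w (k + 1) - w k) ⬝ᵥ (G *ᵥ (w (k + 1) - w k))) :
    Bornology.IsBounded (Set.range w) ∧
    Filter.Tendsto (fun k => ‖w k - w (k + 1)‖) Filter.atTop (nhds 0) ∧
    ∀ winf ∈ S, MapClusterPt winf Filter.atTop w →
      Filter.Tendsto w Filter.atTop (nhds winf) := by
  set q : (Fin N → ℝ) → ℝ := fun v => v ⬝ᵥ (G *ᵥ v)
  have hw : IsStrictlyContractive q S w := hfejer
  obtain ⟨c, hc, hcoer⟩ := hG.exists_pos_mul_sq_norm_le_dotProduct_mulVec
  have hq v : 0 ≤ q v := by simpa using hG.posSemidef.dotProduct_mulVec_nonneg v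
  have hq0 : Tendsto q (𝓝 0) (𝓝 0) := by
    simpa [q] using G.continuous_dotProduct_mulVec.tendsto 0
  obtain ⟨s, hs⟩ := hS
  refine ⟨hw.isBounded_range hc hcoer hs, ?_, fun winf hwinf hcl => ?_⟩
  · simpa only [norm_sub_rev] using
      tendsto_norm_zero_of_mul_sq_norm_le hc hcoer (hw.tendsto_sub_succ hq hs)
  · exact tendsto_iff_norm_sub_tendsto_zero.2 <| tendsto_norm_zero_of_mul_sq_norm_le hc hcoer
      (hw.tendsto_zero_of_mapClusterPt hq hq0 hwinf hcl)
end
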